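/- For every nonempty perfect nowhere dense (Cantor-type) closed set K ⊆ ℝ, there exists a continuous nondecreasing function c_K : ℝ → ℝ whose induced Lebesgue–Stieltjes measure dc_K is nonzero and has topological support exactly K. -/

import Mathlib

/-!
Each basic open set `U` meeting `K` gives a nonempty perfect piece `closure (U ∩ K)`, and a
Cantor-space parametrisation of that piece pushes Lebesgue measure forward to an atomless
probability measure carried by it. A geometrically weighted sum of these countably many measures
is an atomless probability measure whose support is exactly `K`; its distribution function is
continuous because there are no atoms.
-/

open MeasureTheory Set ENNReal

open Filter Topology TopologicalSpace Function ProbabilityTheory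

theorem MeasureTheory.Measure.nullSingletonClass_map_of_injective {α β : Type*}
    [MeasurableSpace α] [MeasurableSpace β] [MeasurableSingletonClass β] {μ : Measure α}
    [NullSingletonClass μ] {f : α → β} (hf : Measurable f) (hinj : Injective f) :
    NullSingletonClass (μ.map f) where
  measure_singleton y := by
    rw [Measure.map_apply hf (measurableSet_singleton y)]
    exact (Subsingleton.preimage subsingleton_singleton hinj).measure_zero μ

theorem Perfect.exists_atomless_probabilityMeasure_compl_null {X : Type*} [MetricSpace X]
    [CompleteSpace X] [MeasurableSpace X] [BorelSpace X] {P : Set X} (hP : Perfect P)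
    (hne : P.Nonempty) :
    ∃ ν : Measure X, IsProbabilityMeasure ν ∧ NullSingletonClass ν ∧ ν Pᶜ = 0 := by
  obtain ⟨f, hrange, hf, hinj⟩ := hP.exists_nat_bool_injection hne
  let e : ℝ ≃ᵐ (ℕ → Bool) := PolishSpace.measurableEquivNatBoolOfNotCountable not_countable
  have hfe : Measurable (f ∘ e) := hf.measurable.comp e.measurable
  have : IsProbabilityMeasure (volume.restrict (Ioc (0 : ℝ) 1)) := ⟨by simp⟩
  refine ⟨(volume.restrict (Ioc (0 : ℝ) 1)).map (f ∘ e),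
    Measure.isProbabilityMeasure_map hfe.aemeasurable,
    Measure.nullSingletonClass_map_of_injective hfe (hinj.comp e.injective), ?_⟩
  have hpre : (f ∘ e) ⁻¹' P = univ := eq_univ_of_forall fun t ↦ hrange (mem_range_self (e t))
  rw [Measure.map_apply hfe hP.closed.measurableSet.compl, preimage_compl, hpre]
  simp

theorem MeasureTheory.exists_atomless_probabilityMeasure_null_iff {X : Type*}
    [MeasurableSpace X] (ν : ℕ → Measure X) [∀ n, IsProbabilityMeasure (ν n)]
    [∀ n, NullSingletonClass (ν n)] :
    ∃ μ : Measure X, IsProbabilityMeasure μ ∧ NullSingletonClass μ ∧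
      ∀ s, μ s = 0 ↔ ∀ n, ν n s = 0 := by
  let μ := Measure.sum fun n ↦ (2⁻¹ : ℝ≥0∞) ^ (n + 1) • ν n
  have hnull : ∀ s, μ s = 0 ↔ ∀ n, ν n s = 0 := by simp [μ]
  refine ⟨μ, ⟨?_⟩, ⟨fun x ↦ (hnull {x}).2 fun n ↦ measure_singleton x⟩, hnull⟩
  simp only [μ, Measure.sum_apply _ MeasurableSet.univ, Measure.smul_apply, measure_univ,
    smul_eq_mul, mul_one, ENNReal.tsum_geometric_add_one, one_sub_inv_two, inv_inv]
  exact ENNReal.inv_mul_cancel two_ne_zero ofNat_ne_top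

theorem Perfect.exists_seq_perfect_subset_nhds {X : Type*} [TopologicalSpace X] [RegularSpace X]
    [SecondCountableTopology X] {K : Set X} (hK : Perfect K) (hne : K.Nonempty) :
    ∃ P : ℕ → Set X, (∀ n, Perfect (P n) ∧ (P n).Nonempty ∧ P n ⊆ K) ∧
      ∀ x ∈ K, ∀ U ∈ 𝓝 x, ∃ n, P n ⊆ U := by
  have hB := isBasis_countableBasis X
  let T := {t ∈ countableBasis X | (t ∩ K).Nonempty}
  have hT : T.Nonempty := by
    obtain ⟨x, hx⟩ := hne
    obtain ⟨t, ht, hxt, -⟩ := hB.exists_closure_subset (univ_mem : univ ∈ 𝓝 x)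
    exact ⟨t, ht, x, hxt, hx⟩
  have hTc : T.Countable := (countable_countableBasis X).mono (sep_subset _ _)
  obtain ⟨g, hg⟩ := hTc.exists_eq_range hT
  have hgT : ∀ n, g n ∈ T := fun n ↦ hg ▸ mem_range_self n
  refine ⟨fun n ↦ closure (g n ∩ K), fun n ↦ ?_, fun x hx U hU ↦ ?_⟩
  · obtain ⟨hgB, x, hxg, hxK⟩ := hgT n
    obtain ⟨hperf, hnonempty⟩ :=
      hK.closure_nhds_inter x hxK hxg (isOpen_of_mem_countableBasis hgB)
    exact ⟨hperf, hnonempty, closure_minimal inter_subset_right hK.closed⟩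
  · obtain ⟨t, htB, hxt, htU⟩ := hB.exists_closure_subset hU
    obtain ⟨n, rfl⟩ : t ∈ range g := hg ▸ ⟨htB, x, hxt, hx⟩
    exact ⟨n, (closure_mono inter_subset_left).trans htU⟩

theorem Perfect.exists_atomless_probabilityMeasure_support_eq {X : Type*} [MetricSpace X]
    [CompleteSpace X] [SecondCountableTopology X] [MeasurableSpace X] [BorelSpace X]
    {K : Set X} (hK : Perfect K) (hne : K.Nonempty) :
    ∃ μ : Measure X, IsProbabilityMeasure μ ∧ NullSingletonClass μ ∧ μ.support = K := by
  obtain ⟨P, hP, hcofinal⟩ := hK.exists_seq_perfect_subset_nhds hne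
  choose ν hprob hatom hνP using fun n ↦
    (hP n).1.exists_atomless_probabilityMeasure_compl_null (hP n).2.1
  obtain ⟨μ, hμ, hμatom, hμnull⟩ := exists_atomless_probabilityMeasure_null_iff ν
  refine ⟨μ, hμ, hμatom, (Measure.support_subset_of_isClosed hK.closed ?_).antisymm ?_⟩
  · exact (hμnull Kᶜ).2 fun n ↦ measure_mono_null (compl_subset_compl.2 (hP n).2.2) (hνP n)
  · intro x hx
    rw [Measure.mem_support_iff_forall]
    intro U hU
    obtain ⟨n, hPU⟩ := hcofinal x hx U hU
    refine pos_iff_ne_zero.2 fun hμU ↦ ?_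
    have hνPn : ν n (P n) = 1 := (prob_compl_eq_zero_iff (hP n).1.closed.measurableSet).1 (hνP n)
    exact one_ne_zero (hνPn.symm.trans (measure_mono_null hPU ((hμnull U).1 hμU n)))

theorem StieltjesFunction.continuous_of_nullSingletonClass (f : StieltjesFunction ℝ)
    [NullSingletonClass f.measure] : Continuous f := by
  refine continuous_iff_continuousAt.2 fun x ↦ ?_
  rw [f.mono.continuousAt_iff_leftLim_eq_rightLim, f.rightLim_eq]
  have hjump := f.measure_singleton x
  rw [MeasureTheory.measure_singleton, eq_comm, ofReal_eq_zero, sub_nonpos] at hjump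
  exact le_antisymm (f.mono.leftLim_le le_rfl) hjump

theorem stmt_13_general (K : Set ℝ) (hK_ne : K.Nonempty) (hK_perfect : Perfect K) :
    ∃ c : StieltjesFunction ℝ, Continuous c ∧ Monotone c ∧
      c.measure ≠ 0 ∧ c.measure Kᶜ = 0 ∧
      ∀ x ∈ K, ∀ ε > (0 : ℝ), 0 < c.measure (Ioo (x - ε) (x + ε)) := by
  obtain ⟨μ, hμ, hμatom, hsupp⟩ := hK_perfect.exists_atomless_probabilityMeasure_support_eq hK_ne
  have hc : (cdf μ).measure = μ := measure_cdf μ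
  have hcont : Continuous (cdf μ) := by
    have : NullSingletonClass (cdf μ).measure := by rw [hc]; exact hμatom
    exact (cdf μ).continuous_of_nullSingletonClass
  refine ⟨cdf μ, hcont, (cdf μ).mono, ?_, ?_, ?_⟩ <;> rw [hc]
  · exact IsProbabilityMeasure.ne_zero μ
  · rw [← hsupp]; exact Measure.measure_compl_support
  · intro x hx ε hε
    rw [← hsupp, Measure.mem_support_iff_forall] at hx
    exact hx _ (Ioo_mem_nhds (by linarith) (by linarith))

/-- For every nonempty perfect nowhere dense closed set `K ⊆ ℝ` there is a continuous
nondecreasing function `c_K : ℝ → ℝ` whose Lebesgue–Stieltjes measure is nonzero and has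
topological support exactly `K` (it vanishes off `K` and is positive on every neighbourhood
of every point of `K`). -/
theorem stmt_13 (K : Set ℝ) (hK_ne : K.Nonempty) (hK_perfect : Perfect K)
    (hK_nd : IsNowhereDense K) :
    ∃ c : StieltjesFunction ℝ, Continuous c ∧ Monotone c ∧
      c.measure ≠ 0 ∧ c.measure Kᶜ = 0 ∧
      ∀ x ∈ K, ∀ ε > (0 : ℝ), 0 < c.measure (Ioo (x - ε) (x + ε)) :=
  stmt_13_general K hK_ne hK_perfect
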